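/- The function F is strictly increasing on ℝ. -/

import Mathlib

open Real Filter MeasureTheory

noncomputable def F : ℝ → ℝ := fun x =>
  if x = 0 then 1/2 else Real.exp x / (Real.exp x - 1) - 1/x

/-! Away from the origin
`F' x = 1 / x ^ 2 - exp x / (exp x - 1) ^ 2 = 1 / x ^ 2 - 1 / (4 sinh² (x / 2))`,
which is positive because `|sinh t| > |t|` for `t ≠ 0`. Since `F (-x) = 1 - F x`, the function
`F - 1/2` is odd, so it is enough to show that `F` is strictly increasing on `[0, ∞)`; the step at
the origin, `1 / 2 < F x` for `x > 0`, is the inequality `tanh (x / 2) < x / 2`. -/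

lemma exp_sub_one_ne_zero {x : ℝ} (hx : x ≠ 0) : exp x - 1 ≠ 0 :=
  sub_ne_zero.2 (mt (exp_eq_one_iff x).1 hx)

lemma exp_sub_one_eq_mul_sinh (x : ℝ) : exp x - 1 = 2 * exp (x / 2) * sinh (x / 2) := by
  rw [sinh_eq, exp_neg]
  field_simp
  rw [sq, ← exp_add, add_halves]

lemma exp_add_one_eq_mul_cosh (x : ℝ) : exp x + 1 = 2 * exp (x / 2) * cosh (x / 2) := by
  rw [cosh_eq, exp_neg]
  field_simp
  rw [sq, ← exp_add, add_halves]

lemma sinh_lt_mul_cosh {t : ℝ} (ht : 0 < t) : sinh t < t * cosh t := by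
  have hmono : StrictMonoOn (fun s => s * cosh s - sinh s) (Set.Ici 0) := by
    refine strictMonoOn_of_deriv_pos (convex_Ici 0) (by fun_prop) fun s hs => ?_
    rw [interior_Ici] at hs
    have hderiv : HasDerivAt (fun s => s * cosh s - sinh s) (s * sinh s) s := by
      have := ((hasDerivAt_id' s).mul (hasDerivAt_cosh s)).sub (hasDerivAt_sinh s)
      exact this.congr_deriv (by ring)
    rw [hderiv.deriv]
    exact mul_pos hs (sinh_pos_iff.2 hs)
  simpa using hmono Set.self_mem_Ici ht.le ht

lemma sq_mul_exp_lt_exp_sub_one_sq {x : ℝ} (hx : x ≠ 0) : x ^ 2 * exp x < (exp x - 1) ^ 2 := by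
  have hsinh : (x / 2) ^ 2 < sinh (x / 2) ^ 2 := by
    rw [sq_lt_sq, abs_sinh]
    exact self_lt_sinh_iff.2 (by positivity)
  have hexp : exp x = exp (x / 2) ^ 2 := by rw [sq, ← exp_add, add_halves]
  rw [exp_sub_one_eq_mul_sinh, hexp]
  nlinarith [pow_pos (exp_pos (x / 2)) 2]

lemma F_neg (x : ℝ) : F (-x) = 1 - F x := by
  rcases eq_or_ne x 0 with rfl | hx
  · norm_num [F]
  have h := exp_sub_one_ne_zero hx
  have h' : 1 - exp x ≠ 0 := fun h0 => h (by linarith)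
  have hneg : exp (-x) / (exp (-x) - 1) = 1 - exp x / (exp x - 1) := by
    rw [exp_neg]
    field_simp
    ring
  simp only [F, hx, neg_eq_zero, if_false, hneg]
  ring

lemma two_mul_exp_sub_one_lt {x : ℝ} (hx : 0 < x) : 2 * (exp x - 1) < x * (exp x + 1) := by
  have h := mul_lt_mul_of_pos_left (sinh_lt_mul_cosh (half_pos hx))
    (by positivity : 0 < 4 * exp (x / 2))
  rw [exp_sub_one_eq_mul_sinh, exp_add_one_eq_mul_cosh]
  linarith

lemma half_lt_F {x : ℝ} (hx : 0 < x) : 1 / 2 < F x := by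
  have hpos : 0 < exp x - 1 := sub_pos.2 (one_lt_exp_iff.2 hx)
  simp only [F, hx.ne', if_false]
  rw [lt_sub_iff_add_lt, div_add_div _ _ two_ne_zero hx.ne', div_lt_div_iff₀ (by positivity) hpos]
  linarith [two_mul_exp_sub_one_lt hx]

lemma hasDerivAt_F {x : ℝ} (hx : x ≠ 0) :
    HasDerivAt F (1 / x ^ 2 - exp x / (exp x - 1) ^ 2) x := by
  have hne := exp_sub_one_ne_zero hx
  have heq : (fun y => exp y / (exp y - 1) - y⁻¹) =ᶠ[nhds x] F := by
    filter_upwards [isOpen_ne.mem_nhds hx] with y hy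
    simp [F, hy]
  refine ((((hasDerivAt_exp x).div ((hasDerivAt_exp x).sub_const 1) hne).sub
    (hasDerivAt_inv hx)).congr_of_eventuallyEq heq.symm).congr_deriv ?_
  field_simp
  ring

lemma strictMonoOn_F_Ioi : StrictMonoOn F (Set.Ioi 0) := by
  refine strictMonoOn_of_deriv_pos (convex_Ioi 0)
    (fun x hx => (hasDerivAt_F (ne_of_gt hx)).continuousAt.continuousWithinAt) fun x hx => ?_
  rw [interior_Ioi] at hx
  have hx0 : x ≠ 0 := ne_of_gt hx
  rw [(hasDerivAt_F hx0).deriv, sub_pos,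
    div_lt_div_iff₀ (pow_pos (sub_pos.2 (one_lt_exp_iff.2 hx)) 2) (pow_pos hx 2)]
  simpa [mul_comm] using sq_mul_exp_lt_exp_sub_one_sq hx0

lemma strictMonoOn_F_Ici : StrictMonoOn F (Set.Ici 0) := by
  rw [← Set.Ioi_insert, strictMonoOn_insert_iff_of_forall_ge (s := Set.Ioi 0) fun _ => le_of_lt]
  have hF0 : F 0 = 1 / 2 := if_pos rfl
  exact ⟨fun x hx _ => hF0 ▸ half_lt_F hx, strictMonoOn_F_Ioi⟩

theorem F_strictMono : StrictMono F := by
  have hodd (x : ℝ) : F (-x) - 1 / 2 = -(F x - 1 / 2) := by rw [F_neg]; ring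
  have hshift : StrictMono fun x => F x - 1 / 2 :=
    strictMono_of_odd_strictMonoOn_nonneg hodd fun a ha b hb hab =>
      sub_lt_sub_right (strictMonoOn_F_Ici ha hb hab) _
  exact fun a b hab => sub_lt_sub_iff_right _ |>.1 (hshift hab)
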